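/- arXiv:1312.4761 — 5 statements merged into one kernel-verified Lean document; each statement's English description precedes it below -/
import Mathlib

section
/- Let 0 < α < 1 and n ≥ 1 a natural number. Then n * ∫₀¹ (1-t)^(-α) * t^(n-1) dt = n * Γ(1-α) * Γ(n) / Γ(n+1-α), and this quantity is at least Γ(1-α) * n^α. -/
/-!
The integral is Euler's Beta integral `B(n, 1 - α)`. For the lower bound, log-convexity of `Γ`
at `n + 1 - α = α n + (1 - α)(n + 1)` gives `Γ(n + 1 - α) ≤ Γ(n)^α Γ(n + 1)^(1 - α)
= n^(1 - α) Γ(n)`, i.e. `n^α Γ(n + 1 - α) ≤ Γ(n + 1)`.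
-/

open Real

namespace Real

theorem integral_rpow_mul_one_sub_rpow_eq_Gamma_mul_Gamma_div {a b : ℝ} (ha : 0 < a)
    (hb : 0 < b) :
    ∫ t in (0:ℝ)..1, t ^ (a - 1) * (1 - t) ^ (b - 1) = Gamma a * Gamma b / Gamma (a + b) := by
  have hbeta : Complex.betaIntegral a b =
      ((∫ t in (0:ℝ)..1, t ^ (a - 1) * (1 - t) ^ (b - 1) : ℝ) : ℂ) := by
    rw [Complex.betaIntegral, ← intervalIntegral.integral_ofReal]
    refine intervalIntegral.integral_congr fun t ht => ?_
    rw [Set.uIcc_of_le zero_le_one] at ht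
    push_cast
    rw [Complex.ofReal_cpow ht.1, Complex.ofReal_cpow (sub_nonneg.2 ht.2)]
    push_cast
    rfl
  have h := Complex.betaIntegral_eq_Gamma_mul_div a b (by simpa) (by simpa)
  rw [hbeta, ← Complex.ofReal_add, Complex.Gamma_ofReal, Complex.Gamma_ofReal,
    Complex.Gamma_ofReal] at h
  exact_mod_cast h

/-- A form of Gautschi's inequality. -/
theorem rpow_mul_Gamma_add_one_sub_le_Gamma_add_one {x α : ℝ} (hx : 0 < x) (hα0 : 0 < α)
    (hα1 : α < 1) : x ^ α * Gamma (x + 1 - α) ≤ Gamma (x + 1) := by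
  have hΓx : 0 < Gamma x := Gamma_pos_of_pos hx
  have hlogconv : Gamma (x + 1 - α) ≤ Gamma x ^ α * Gamma (x + 1) ^ (1 - α) := by
    have := Gamma_mul_add_mul_le_rpow_Gamma_mul_rpow_Gamma hx (by linarith : 0 < x + 1) hα0
      (sub_pos.2 hα1) (by ring)
    rwa [show α * x + (1 - α) * (x + 1) = x + 1 - α by ring] at this
  calc x ^ α * Gamma (x + 1 - α)
      ≤ x ^ α * (Gamma x ^ α * Gamma (x + 1) ^ (1 - α)) := by gcongr
    _ = (x ^ α * x ^ (1 - α)) * (Gamma x ^ α * Gamma x ^ (1 - α)) := by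
        rw [Gamma_add_one hx.ne', mul_rpow hx.le hΓx.le]; ring
    _ = Gamma (x + 1) := by
        rw [← rpow_add hx, ← rpow_add hΓx, add_sub_cancel, rpow_one, rpow_one,
          Gamma_add_one hx.ne']

end Real

theorem stmt_4 (α : ℝ) (hα0 : 0 < α) (hα1 : α < 1) (n : ℕ) (hn : 1 ≤ n) :
    (n : ℝ) * ∫ t in (0:ℝ)..1, (1 - t) ^ (-α) * t ^ (n - 1) =
      (n : ℝ) * Real.Gamma (1 - α) * Real.Gamma n / Real.Gamma (n + 1 - α) ∧
    Real.Gamma (1 - α) * (n : ℝ) ^ α ≤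
      (n : ℝ) * ∫ t in (0:ℝ)..1, (1 - t) ^ (-α) * t ^ (n - 1) := by
  have hn0 : (0:ℝ) < n := by exact_mod_cast hn
  have hbeta : ∫ t in (0:ℝ)..1, (1 - t) ^ (-α) * t ^ (n - 1) =
      Gamma (1 - α) * Gamma n / Gamma (n + 1 - α) := by
    have h := integral_rpow_mul_one_sub_rpow_eq_Gamma_mul_Gamma_div hn0 (sub_pos.2 hα1)
    have hintegrand (t : ℝ) :
        (1 - t) ^ (-α) * t ^ (n - 1) = t ^ ((n:ℝ) - 1) * (1 - t) ^ ((1 - α) - 1) := by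
      rw [← Nat.cast_one, ← Nat.cast_sub hn, rpow_natCast, sub_sub_cancel_left, mul_comm]
    rw [show (n:ℝ) + (1 - α) = n + 1 - α by ring] at h
    simp_rw [hintegrand, h, mul_comm (Gamma n)]
  refine ⟨by rw [hbeta]; ring, ?_⟩
  have hgautschi := rpow_mul_Gamma_add_one_sub_le_Gamma_add_one hn0 hα0 hα1
  rw [hbeta, mul_div_assoc', mul_left_comm, ← Gamma_add_one hn0.ne', mul_div_assoc]
  gcongr
  rwa [le_div_iff₀ (Gamma_pos_of_pos (by linarith))]
end

section
/- Let k ≤ n be natural numbers, w₀ : [0,∞) → [0,∞) locally integrable against t^(k-1) dt, and 0 ≤ a ≤ b. Then (n / (b^n - a^n)) · ∫ₐᵇ w₀(t) t^(n-1) dt ≤ (n/k) · (k / (b^k - a^k)) · ∫ₐᵇ w₀(t) t^(k-1) dt. -/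
/-!
On `[a, b]` the density `t ^ (n - 1) / (b ^ n - a ^ n)` is pointwise dominated by
`t ^ (k - 1) / (b ^ k - a ^ k)`: after clearing denominators this is
`t ^ (n - k) * (b ^ k - a ^ k) ≤ b ^ n - a ^ n`, which holds because
`b ^ n - a ^ n = b ^ (n - k) * (b ^ k - a ^ k) + a ^ k * (b ^ (n - k) - a ^ (n - k))`.
Multiplying by `n * w₀ t ≥ 0` and integrating gives the claim, the factor `n / k` only
converting the normalisation `k / (b ^ k - a ^ k)` into `n / (b ^ k - a ^ k)`.
-/

open intervalIntegral

lemma pow_sub_mul_sub_pow_le_sub_pow {a b t : ℝ} {k n : ℕ} (ha : 0 ≤ a) (hab : a ≤ b)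
    (ht : 0 ≤ t) (htb : t ≤ b) (hkn : k ≤ n) :
    t ^ (n - k) * (b ^ k - a ^ k) ≤ b ^ n - a ^ n := by
  have hsplit : ∀ x : ℝ, x ^ n = x ^ (n - k) * x ^ k := fun x => by
    rw [← pow_add, Nat.sub_add_cancel hkn]
  have hba : 0 ≤ b ^ k - a ^ k := sub_nonneg.mpr (pow_le_pow_left₀ ha hab k)
  calc t ^ (n - k) * (b ^ k - a ^ k) ≤ b ^ (n - k) * (b ^ k - a ^ k) := by gcongr
    _ ≤ b ^ (n - k) * (b ^ k - a ^ k) + a ^ k * (b ^ (n - k) - a ^ (n - k)) := by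
        have : a ^ (n - k) ≤ b ^ (n - k) := pow_le_pow_left₀ ha hab _
        nlinarith [pow_nonneg ha k]
    _ = b ^ n - a ^ n := by rw [hsplit a, hsplit b]; ring

lemma pow_pred_div_sub_pow_le {a b t : ℝ} {k n : ℕ} (hk : 1 ≤ k) (hkn : k ≤ n)
    (ha : 0 ≤ a) (hab : a < b) (ht : t ∈ Set.Icc a b) :
    t ^ (n - 1) / (b ^ n - a ^ n) ≤ t ^ (k - 1) / (b ^ k - a ^ k) := by
  have ht0 : 0 ≤ t := ha.trans ht.1
  have hsub_pos : ∀ m, m ≠ 0 → 0 < b ^ m - a ^ m := fun m hm =>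
    sub_pos.mpr (pow_lt_pow_left₀ hab ha hm)
  rw [div_le_div_iff₀ (hsub_pos n (by omega)) (hsub_pos k (by omega)),
    show n - 1 = (k - 1) + (n - k) by omega, pow_add, mul_assoc]
  exact mul_le_mul_of_nonneg_left
    (pow_sub_mul_sub_pow_le_sub_pow ha hab.le ht0 ht.2 hkn) (pow_nonneg ht0 _)

theorem stmt_8 (k n : ℕ) (hk : 1 ≤ k) (hkn : k ≤ n) (w₀ : ℝ → ℝ)
    (hpos : ∀ t, 0 ≤ w₀ t) (a b : ℝ) (ha : 0 ≤ a) (hab : a ≤ b)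
    (hint : IntervalIntegrable (fun t => w₀ t * t ^ (k - 1)) MeasureTheory.volume a b) :
    (n / (b ^ n - a ^ n)) * ∫ t in a..b, w₀ t * t ^ (n - 1) ≤
      ((n : ℝ) / k) * ((k / (b ^ k - a ^ k)) * ∫ t in a..b, w₀ t * t ^ (k - 1)) := by
  rcases hab.eq_or_lt with rfl | hab
  · simp
  have hint_n : IntervalIntegrable (fun t => w₀ t * t ^ (n - 1)) MeasureTheory.volume a b := by
    have := hint.mul_continuousOn (continuous_pow (n - k)).continuousOn
    refine this.congr fun t _ => ?_
    simp only [mul_assoc, ← pow_add, show k - 1 + (n - k) = n - 1 by omega]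
  have hk0 : (k : ℝ) ≠ 0 := by positivity
  rw [← mul_assoc, div_mul_div_comm, mul_comm (n : ℝ), mul_div_mul_left _ _ hk0,
    ← integral_const_mul, ← integral_const_mul]
  refine integral_mono_on hab.le (hint_n.const_mul _) (hint.const_mul _) fun t ht => ?_
  have hdens := pow_pred_div_sub_pow_le hk hkn ha hab ht
  calc n / (b ^ n - a ^ n) * (w₀ t * t ^ (n - 1))
      = n * w₀ t * (t ^ (n - 1) / (b ^ n - a ^ n)) := by ring
    _ ≤ n * w₀ t * (t ^ (k - 1) / (b ^ k - a ^ k)) := by have := hpos t; gcongr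
    _ = n / (b ^ k - a ^ k) * (w₀ t * t ^ (k - 1)) := by ring
end

section
/- Let k ≥ 1 be a natural number (or real k ≥ 1), ρ ≥ 0, and 0 ≤ a ≤ b. Then ((ρ² + b²)^(k/2) - (ρ² + a²)^(k/2)) · (b² / (ρ² + b²))^(k/2 - 1) ≤ (k/2) · (b^k - a^k). -/
/-!
By convexity of `t ↦ t ^ (k/2)`, the increment `(ρ² + b²)^(k/2) - (ρ² + a²)^(k/2)` is at most
`(k/2) (ρ² + b²)^(k/2 - 1) (b² - a²)`. Multiplying by `(b² / (ρ² + b²))^(k/2 - 1)` turns the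
factor `(ρ² + b²)^(k/2 - 1)` into `b^(k-2)`, and `b^(k-2) (b² - a²) ≤ b^k - a^k` since
`a^k = a² a^(k-2) ≤ a² b^(k-2)`.
-/

open Real

lemma rpow_sub_rpow_le_mul_rpow_sub_one_mul {p x y : ℝ} (hp : 1 ≤ p) (hy : 0 ≤ y)
    (hyx : y ≤ x) : x ^ p - y ^ p ≤ p * x ^ (p - 1) * (x - y) := by
  obtain rfl | hyx := hyx.eq_or_lt
  · simp
  have hx : 0 < x := hy.trans_lt hyx
  have hslope : slope (· ^ p) y x ≤ p * x ^ (p - 1) :=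
    (convexOn_rpow hp).slope_le_of_hasDerivAt hy hx.le hyx
      (hasDerivAt_rpow_const (Or.inl hx.ne'))
  rw [slope_def_field] at hslope
  rwa [div_le_iff₀ (sub_pos.2 hyx)] at hslope

lemma pow_mul_sub_le_pow_add_sub {a b : ℝ} (ha : 0 ≤ a) (hab : a ≤ b) (m n : ℕ) :
    b ^ m * (b ^ n - a ^ n) ≤ b ^ (m + n) - a ^ (m + n) := by
  have : a ^ m * a ^ n ≤ b ^ m * a ^ n := by gcongr
  rw [pow_add, pow_add]
  linarith

lemma sq_rpow_div_two_sub_one {b : ℝ} (hb : 0 ≤ b) {k : ℕ} (hk : 2 ≤ k) :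
    (b ^ 2) ^ ((k : ℝ) / 2 - 1) = b ^ (k - 2) := by
  have hexp : (2 : ℝ) * ((k : ℝ) / 2 - 1) = ((k - 2 : ℕ) : ℝ) := by
    rw [Nat.cast_sub hk]; push_cast; ring
  rw [← rpow_natCast b 2, ← rpow_mul hb, Nat.cast_ofNat, hexp, rpow_natCast]

lemma rpow_mul_div_rpow {x c : ℝ} (hx : 0 < x) (hc : 0 ≤ c) (q : ℝ) :
    x ^ q * (c / x) ^ q = c ^ q := by
  rw [← mul_rpow hx.le (div_nonneg hc hx.le), mul_div_cancel₀ _ hx.ne']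

theorem stmt_10_general (k : ℕ) (hk : 2 ≤ k) (ρ a b : ℝ) (ha : 0 ≤ a)
    (hab : a ≤ b) :
    ((ρ ^ 2 + b ^ 2) ^ ((k : ℝ) / 2) - (ρ ^ 2 + a ^ 2) ^ ((k : ℝ) / 2)) *
        (b ^ 2 / (ρ ^ 2 + b ^ 2)) ^ ((k : ℝ) / 2 - 1) ≤
      ((k : ℝ) / 2) * (b ^ k - a ^ k) := by
  have hb : 0 ≤ b := ha.trans hab
  obtain rfl | hb := hb.eq_or_lt
  · obtain rfl : a = 0 := le_antisymm hab ha
    simp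
  have hp : 1 ≤ (k : ℝ) / 2 := by
    rw [le_div_iff₀ two_pos]
    exact_mod_cast hk
  set p : ℝ := (k : ℝ) / 2
  have hX : 0 < ρ ^ 2 + b ^ 2 := by positivity
  calc ((ρ ^ 2 + b ^ 2) ^ p - (ρ ^ 2 + a ^ 2) ^ p) * (b ^ 2 / (ρ ^ 2 + b ^ 2)) ^ (p - 1)
      ≤ p * (ρ ^ 2 + b ^ 2) ^ (p - 1) * ((ρ ^ 2 + b ^ 2) - (ρ ^ 2 + a ^ 2)) *
          (b ^ 2 / (ρ ^ 2 + b ^ 2)) ^ (p - 1) := by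
        gcongr
        exact rpow_sub_rpow_le_mul_rpow_sub_one_mul hp (by positivity) (by gcongr)
    _ = p * (b ^ (k - 2) * (b ^ 2 - a ^ 2)) := by
        rw [← sq_rpow_div_two_sub_one hb.le hk, ← rpow_mul_div_rpow hX (sq_nonneg b)]
        ring
    _ ≤ p * (b ^ k - a ^ k) := by
        have hpow := pow_mul_sub_le_pow_add_sub ha hab (k - 2) 2
        rw [Nat.sub_add_cancel hk] at hpow
        gcongr

theorem stmt_10 (k : ℕ) (hk : 2 ≤ k) (ρ a b : ℝ) (hρ : 0 ≤ ρ) (ha : 0 ≤ a)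
    (hab : a ≤ b) :
    ((ρ ^ 2 + b ^ 2) ^ ((k : ℝ) / 2) - (ρ ^ 2 + a ^ 2) ^ ((k : ℝ) / 2)) *
        (b ^ 2 / (ρ ^ 2 + b ^ 2)) ^ ((k : ℝ) / 2 - 1) ≤
      ((k : ℝ) / 2) * (b ^ k - a ^ k) :=
  stmt_10_general k hk ρ a b ha hab
end

section
/- Let u(x) = u₀(|x|) be a nonnegative radial locally integrable function on ℝⁿ. Then the centered Hardy–Littlewood maximal function satisfies Mu(x) ≤ 2·𝒜u(x) for all x, where 𝒜u(x) = sup over 0 ≤ a ≤ |x| ≤ b of the average of u over the annulus {a ≤ |y| ≤ b}. -/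
/-!
Let `B = ball x R` and let `Γ` be the set of points `y` with `‖y‖ ≤ ‖x‖` whose segment `[0, y]`
meets `B`. Every ray from the origin meets `S = B ∪ Γ` in an interval of radii `[α, β]`, up to
its endpoints, with `α ≤ ‖x‖ ≤ β`. In polar coordinates the integral of a radial function over
`S` is therefore an integral over directions of one-dimensional integrals over such intervals,
and each of these is, up to the measure of the unit sphere, the integral over the annulus
`{α ≤ ‖y‖ ≤ β}`. Comparing averages, some such annulus `A` satisfies `⨍_S u ≤ ⨍_A u`.

On the other hand `Γ \ B` lies in the ball of radius `R` centred at `(√(‖x‖² - R²) / ‖x‖) • x`,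
so `|S| ≤ 2 |B|`, and since `u ≥ 0` this gives `⨍_B u ≤ 2 ⨍_S u ≤ 2 ⨍_A u`.
-/

open Set Metric MeasureTheory
open scoped ENNReal RealInnerProductSpace

local notation "dim" => Module.finrank ℝ

theorem integral_lt_integral_of_lt_on_support {α : Type*} [MeasurableSpace α] {μ : Measure α}
    {f g w : α → ℝ} (hf : Integrable f μ) (hg : Integrable g μ) (hle : ∀ a, f a ≤ g a)
    (hw : 0 ≤ w) (hwpos : 0 < ∫ a, w a ∂μ) (hlt : ∀ a, w a ≠ 0 → f a < g a) :
    ∫ a, f a ∂μ < ∫ a, g a ∂μ := by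
  have hsupp : 0 < μ (Function.support w) :=
    (integral_pos_iff_support_of_nonneg hw (.of_integral_ne_zero hwpos.ne')).1 hwpos
  rw [← sub_pos, ← integral_sub hg hf, integral_pos_iff_support_of_nonneg
    (fun a => sub_nonneg.2 (hle a)) (hg.sub hf)]
  exact hsupp.trans_le (measure_mono fun a ha => (sub_pos.2 (hlt a ha)).ne')

theorem setAverage_le_mul_setAverage_of_subset {α : Type*} [MeasurableSpace α] {μ : Measure α}
    {f : α → ℝ} {s t : Set α} (hst : s ⊆ t) (hf : 0 ≤ᵐ[μ.restrict t] f)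
    (hfi : IntegrableOn f t μ) (hs : μ s ≠ 0) (ht : μ t ≠ ∞) {C : ℝ}
    (hC : μ.real t ≤ C * μ.real s) :
    ⨍ x in s, f x ∂μ ≤ C * ⨍ x in t, f x ∂μ := by
  have hs_pos : 0 < μ.real s := ENNReal.toReal_pos hs (ne_top_of_le_ne_top ht (measure_mono hst))
  have ht_pos : 0 < μ.real t := hs_pos.trans_le (measureReal_mono hst ht)
  have hinv : (μ.real s)⁻¹ ≤ C * (μ.real t)⁻¹ := by
    rw [← div_eq_mul_inv, le_div_iff₀ ht_pos, inv_mul_le_iff₀ hs_pos, mul_comm]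
    exact hC
  simp only [setAverage_eq, smul_eq_mul, ← mul_assoc]
  calc (μ.real s)⁻¹ * ∫ x in s, f x ∂μ ≤ (μ.real s)⁻¹ * ∫ x in t, f x ∂μ :=
        mul_le_mul_of_nonneg_left (setIntegral_mono_set hfi hf hst.eventuallyLE)
          (inv_nonneg.2 hs_pos.le)
    _ ≤ C * (μ.real t)⁻¹ * ∫ x in t, f x ∂μ :=
        mul_le_mul_of_nonneg_right hinv (integral_nonneg_of_ae hf)

theorem quadratic_nonpos_of_mem_Icc {a b c p q s : ℝ} (ha : 0 ≤ a)
    (hp : a * p ^ 2 + b * p + c ≤ 0) (hq : a * q ^ 2 + b * q + c ≤ 0) (hs : s ∈ Icc p q) :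
    a * s ^ 2 + b * s + c ≤ 0 := by
  obtain ⟨hps, hsq⟩ := hs
  rcases eq_or_lt_of_le (hps.trans hsq) with hpq | hpq
  · obtain rfl : s = p := le_antisymm (hpq ▸ hsq) hps
    exact hp
  · have key : (q - p) * (a * s ^ 2 + b * s + c) = (q - s) * (a * p ^ 2 + b * p + c) +
        (s - p) * (a * q ^ 2 + b * q + c) - a * (s - p) * (q - s) * (q - p) := by ring
    have h1 : (q - s) * (a * p ^ 2 + b * p + c) ≤ 0 :=
      mul_nonpos_of_nonneg_of_nonpos (by linarith) hp
    have h2 : (s - p) * (a * q ^ 2 + b * q + c) ≤ 0 :=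
      mul_nonpos_of_nonneg_of_nonpos (by linarith) hq
    have h3 : 0 ≤ a * (s - p) * (q - s) * (q - p) := by
      have := sub_nonneg.2 hps; have := sub_nonneg.2 hsq; have := sub_pos.2 hpq; positivity
    exact nonpos_of_mul_nonpos_right (by linarith) (sub_pos.2 hpq)

theorem volumeIoiPow_preimage_val_null (n : ℕ) {s : Set ℝ} (hs : volume s = 0) :
    Measure.volumeIoiPow n (Subtype.val ⁻¹' s) = 0 :=
  withDensity_absolutelyContinuous _ _ <| by
    rw [(MeasurableEmbedding.subtype_coe measurableSet_Ioi).comap_apply]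
    exact measure_mono_null (image_preimage_subset _ _) hs

theorem preimage_norm_Icc_subset_closedBall {E : Type*} [SeminormedAddCommGroup E] (a b : ℝ) :
    (‖·‖) ⁻¹' Icc a b ⊆ closedBall (0 : E) b :=
  fun _ hy => mem_closedBall_zero_iff.2 hy.2

theorem integrableOn_preimage_norm_Icc {E : Type*} [NormedAddCommGroup E] [MeasurableSpace E]
    [ProperSpace E] {μ : Measure E} {u : E → ℝ} (hu : LocallyIntegrable u μ) (a b : ℝ) :
    IntegrableOn u ((‖·‖) ⁻¹' Icc a b) μ :=
  (hu.integrableOn_isCompact (isCompact_closedBall 0 b)).mono_set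
    (preimage_norm_Icc_subset_closedBall a b)

section Polar

variable {E : Type*} [NormedAddCommGroup E] [NormedSpace ℝ E]

theorem homeomorphUnitSphereProd_smul (y : ({0}ᶜ : Set E)) :
    ((homeomorphUnitSphereProd E y).2 : ℝ) • ((homeomorphUnitSphereProd E y).1 : E) = y := by
  simp [smul_inv_smul₀ (norm_ne_zero_iff.2 y.2)]

theorem norm_smul_of_norm_eq_one {ω : E} (hω : ‖ω‖ = 1) {r : ℝ} (hr : 0 ≤ r) : ‖r • ω‖ = r := by
  rw [norm_smul_of_nonneg hr, hω, mul_one]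

variable [MeasurableSpace E] [BorelSpace E] [FiniteDimensional ℝ E] (μ : Measure E)
  [μ.IsAddHaarMeasure]

theorem integrable_toSphere_prod_volumeIoiPow {g : E → ℝ} (hg : Integrable g μ) :
    Integrable (fun z : sphere (0 : E) 1 × Ioi (0 : ℝ) => g ((z.2 : ℝ) • (z.1 : E)))
      (μ.toSphere.prod (Measure.volumeIoiPow (dim E - 1))) := by
  have hemb := MeasurableEmbedding.subtype_coe (measurableSet_singleton (0 : E)).compl
  have hg' : Integrable (g ∘ Subtype.val) (μ.comap ((↑) : ({0}ᶜ : Set E) → E)) := by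
    rw [← hemb.integrable_map_iff, hemb.map_comap]
    exact hg.restrict
  rw [← μ.measurePreserving_homeomorphUnitSphereProd.integrable_comp_emb
    (homeomorphUnitSphereProd E).measurableEmbedding]
  exact hg'.congr (.of_forall fun y => by
    simp only [Function.comp, homeomorphUnitSphereProd_smul])

theorem integral_eq_integral_toSphere_volumeIoiPow [Nontrivial E] {g : E → ℝ}
    (hg : Integrable g μ) :
    ∫ y, g y ∂μ = ∫ ω : sphere (0 : E) 1, ∫ r : Ioi (0 : ℝ),
      g ((r : ℝ) • (ω : E)) ∂Measure.volumeIoiPow (dim E - 1) ∂μ.toSphere := by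
  calc ∫ y, g y ∂μ = ∫ y : ({0}ᶜ : Set E), g y ∂(μ.comap (↑)) := by
        rw [integral_subtype_comap (measurableSet_singleton _).compl, restrict_compl_singleton]
    _ = _ := by
        rw [← integral_prod _ (integrable_toSphere_prod_volumeIoiPow μ hg),
          ← μ.measurePreserving_homeomorphUnitSphereProd.integral_comp
            (homeomorphUnitSphereProd E).measurableEmbedding]
        simp only [homeomorphUnitSphereProd_smul]

end Polar

section Radial

variable {E : Type*} [NormedAddCommGroup E] [NormedSpace ℝ E]

noncomputable def rayIntegral (S : Set E) (f : E → ℝ) (ω : E) : ℝ :=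
  ∫ r : Ioi (0 : ℝ), S.indicator f ((r : ℝ) • ω) ∂Measure.volumeIoiPow (dim E - 1)

theorem rayIntegral_one_nonneg (S : Set E) (ω : E) : 0 ≤ rayIntegral S (fun _ => 1) ω :=
  integral_nonneg fun _ => indicator_nonneg (fun _ _ => zero_le_one) _

variable {u : E → ℝ} {u₀ : ℝ → ℝ}

theorem indicator_preimage_norm_smul (hrad : ∀ y, u y = u₀ ‖y‖) (s : Set ℝ) {ω : E}
    (hω : ‖ω‖ = 1) {r : ℝ} (hr : 0 ≤ r) :
    ((‖·‖) ⁻¹' s).indicator u (r • ω) = s.indicator u₀ r := by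
  have hmem : r • ω ∈ (‖·‖) ⁻¹' s ↔ r ∈ s := by
    rw [mem_preimage, norm_smul_of_norm_eq_one hω hr]
  by_cases hs : r ∈ s
  · rw [indicator_of_mem hs, indicator_of_mem (hmem.2 hs), hrad, norm_smul_of_norm_eq_one hω hr]
  · rw [indicator_of_notMem hs, indicator_of_notMem (mt hmem.1 hs)]

theorem indicator_smul_ae_eq_indicator_Icc (hrad : ∀ y, u y = u₀ ‖y‖) (n : ℕ) {S : Set E}
    {ω : E} (hω : ‖ω‖ = 1) {α β : ℝ} (hIoo : ∀ r ∈ Ioo α β, r • ω ∈ S)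
    (hIcc : ∀ r, 0 < r → r • ω ∈ S → r ∈ Icc α β) :
    (fun r : Ioi (0 : ℝ) => S.indicator u ((r : ℝ) • ω))
      =ᵐ[Measure.volumeIoiPow n] fun r => (Icc α β).indicator u₀ r := by
  have hends : volume ({α, β} : Set ℝ) = 0 := (toFinite _).measure_zero _
  refine measure_mono_null (fun r (hr : _ ≠ _) => ?_) (volumeIoiPow_preimage_val_null n hends)
  have hr0 : (0 : ℝ) < r := r.2
  by_contra hend
  simp only [mem_preimage, mem_insert_iff, mem_singleton_iff, not_or] at hend
  apply hr
  show S.indicator u ((r : ℝ) • ω) = (Icc α β).indicator u₀ r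
  by_cases hS : (r : ℝ) • ω ∈ S
  · rw [indicator_of_mem hS, indicator_of_mem (hIcc r hr0 hS), hrad,
      norm_smul_of_norm_eq_one hω hr0.le]
  · have hIcc' : (r : ℝ) ∉ Icc α β := fun h => hS (hIoo r
      ⟨lt_of_le_of_ne h.1 (Ne.symm hend.1), lt_of_le_of_ne h.2 hend.2⟩)
    rw [indicator_of_notMem hS, indicator_of_notMem hIcc']

variable [MeasurableSpace E] [BorelSpace E] [FiniteDimensional ℝ E] {μ : Measure E}
  [μ.IsAddHaarMeasure]

theorem integrable_rayIntegral {f : E → ℝ} {S : Set E} (hS : MeasurableSet S)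
    (hf : IntegrableOn f S μ) :
    Integrable (fun ω : sphere (0 : E) 1 => rayIntegral S f ω) μ.toSphere :=
  (integrable_toSphere_prod_volumeIoiPow μ
    ((integrable_indicator_iff hS).2 hf)).integral_prod_left

variable [Nontrivial E]

theorem setIntegral_eq_integral_rayIntegral {f : E → ℝ} {S : Set E} (hS : MeasurableSet S)
    (hf : IntegrableOn f S μ) :
    ∫ y in S, f y ∂μ = ∫ ω : sphere (0 : E) 1, rayIntegral S f ω ∂μ.toSphere := by
  rw [← integral_indicator hS,
    integral_eq_integral_toSphere_volumeIoiPow μ ((integrable_indicator_iff hS).2 hf)]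
  rfl

theorem setIntegral_preimage_norm (hrad : ∀ y, u y = u₀ ‖y‖) {s : Set ℝ} (hs : MeasurableSet s)
    (hu : IntegrableOn u ((‖·‖) ⁻¹' s) μ) :
    ∫ y in (‖·‖) ⁻¹' s, u y ∂μ = μ.toSphere.real univ *
      ∫ r : Ioi (0 : ℝ), s.indicator u₀ r ∂Measure.volumeIoiPow (dim E - 1) := by
  rw [setIntegral_eq_integral_rayIntegral (measurable_norm hs) hu, ← smul_eq_mul,
    ← integral_const]
  refine integral_congr_ae (.of_forall fun ω => integral_congr_ae (.of_forall fun r => ?_))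
  exact indicator_preimage_norm_smul hrad s (mem_sphere_zero_iff_norm.1 ω.2) r.2.le

theorem mul_rayIntegral_eq_setIntegral (hrad : ∀ y, u y = u₀ ‖y‖)
    (hu : LocallyIntegrable u μ) {S : Set E} {ω : E} (hω : ‖ω‖ = 1) {α β : ℝ}
    (hIoo : ∀ r ∈ Ioo α β, r • ω ∈ S) (hIcc : ∀ r, 0 < r → r • ω ∈ S → r ∈ Icc α β) :
    μ.toSphere.real univ * rayIntegral S u ω = ∫ y in (‖·‖) ⁻¹' Icc α β, u y ∂μ := by
  rw [rayIntegral, integral_congr_ae (indicator_smul_ae_eq_indicator_Icc hrad _ hω hIoo hIcc),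
    setIntegral_preimage_norm hrad measurableSet_Icc (integrableOn_preimage_norm_Icc hu α β)]

theorem rayIntegral_le_of_setAverage_lt (hrad : ∀ y, u y = u₀ ‖y‖)
    (hu : LocallyIntegrable u μ) {S : Set E} {ω : E} (hω : ‖ω‖ = 1) {α β : ℝ}
    (hIoo : ∀ r ∈ Ioo α β, r • ω ∈ S) (hIcc : ∀ r, 0 < r → r • ω ∈ S → r ∈ Icc α β) {K : ℝ}
    (hK : ⨍ y in (‖·‖) ⁻¹' Icc α β, u y ∂μ < K) :
    rayIntegral S u ω ≤ K * rayIntegral S (fun _ => 1) ω ∧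
      (rayIntegral S (fun _ => 1) ω ≠ 0 →
        rayIntegral S u ω < K * rayIntegral S (fun _ => 1) ω) := by
  have hσ : 0 < μ.toSphere.real univ :=
    ENNReal.toReal_pos (Measure.measure_univ_ne_zero.2 μ.toSphere_ne_zero) (measure_ne_top _ _)
  have hu' := mul_rayIntegral_eq_setIntegral hrad hu hω hIoo hIcc
  have h1 := mul_rayIntegral_eq_setIntegral (u := fun _ => 1) (u₀ := fun _ => 1) (fun _ => rfl)
    (locallyIntegrable_const (μ := μ) 1) hω hIoo hIcc
  rw [setIntegral_const, smul_eq_mul, mul_one] at h1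
  have havg := measure_smul_setAverage u <|
    ((measure_mono (preimage_norm_Icc_subset_closedBall α β)).trans_lt
      (measure_closedBall_lt_top (μ := μ))).ne
  rw [smul_eq_mul] at havg
  have key : μ.toSphere.real univ * (K * rayIntegral S (fun _ => 1) ω - rayIntegral S u ω) =
      μ.real ((‖·‖) ⁻¹' Icc α β) * (K - ⨍ y in (‖·‖) ⁻¹' Icc α β, u y ∂μ) := by
    linear_combination K * h1 - hu' + havg
  refine ⟨sub_nonneg.1 <| (mul_nonneg_iff_of_pos_left hσ).1 <|
    key ▸ mul_nonneg measureReal_nonneg (sub_nonneg.2 hK.le), fun h0 => ?_⟩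
  have hpos : 0 < rayIntegral S (fun _ => 1) ω := (rayIntegral_one_nonneg S ω).lt_of_ne' h0
  exact sub_pos.1 <| (mul_pos_iff_of_pos_left hσ).1 <|
    key ▸ mul_pos (h1 ▸ mul_pos hσ hpos) (sub_pos.2 hK)

theorem exists_setAverage_le_setAverage_annulus (hrad : ∀ y, u y = u₀ ‖y‖)
    (hu : LocallyIntegrable u μ) {S : Set E} (hSm : MeasurableSet S)
    (hSb : Bornology.IsBounded S) (hS0 : μ S ≠ 0) {T : ℝ}
    (hslice : ∀ ω : E, ‖ω‖ = 1 → ∃ α β, 0 ≤ α ∧ α ≤ T ∧ T ≤ β ∧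
      (∀ r ∈ Ioo α β, r • ω ∈ S) ∧ ∀ r, 0 < r → r • ω ∈ S → r ∈ Icc α β) :
    ∃ a b, 0 ≤ a ∧ a ≤ T ∧ T ≤ b ∧ ⨍ y in S, u y ∂μ ≤ ⨍ y in (‖·‖) ⁻¹' Icc a b, u y ∂μ := by
  by_contra! hlt
  set K := ⨍ y in S, u y ∂μ
  have hSfin : μ S ≠ ∞ := hSb.measure_lt_top.ne
  have huS : IntegrableOn u S μ :=
    (hu.integrableOn_isCompact hSb.isCompact_closure).mono_set subset_closure
  have h1S : IntegrableOn (fun _ => (1 : ℝ)) S μ := integrableOn_const hSfin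
  have hdir (ω : sphere (0 : E) 1) : rayIntegral S u ω ≤ K * rayIntegral S (fun _ => 1) ω ∧
      (rayIntegral S (fun _ => 1) ω ≠ 0 →
        rayIntegral S u ω < K * rayIntegral S (fun _ => 1) ω) := by
    have hω := mem_sphere_zero_iff_norm.1 ω.2
    obtain ⟨α, β, hα, hαT, hTβ, hIoo, hIcc⟩ := hslice ω hω
    exact rayIntegral_le_of_setAverage_lt hrad hu hω hIoo hIcc (hlt α β hα hαT hTβ)
  have hvol := setIntegral_eq_integral_rayIntegral hSm h1S
  rw [setIntegral_const, smul_eq_mul, mul_one] at hvol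
  have hlt_S : ∫ y in S, u y ∂μ < K * μ.real S := by
    rw [setIntegral_eq_integral_rayIntegral hSm huS, hvol, ← integral_const_mul]
    exact integral_lt_integral_of_lt_on_support (integrable_rayIntegral hSm huS)
      ((integrable_rayIntegral hSm h1S).const_mul _) (fun ω => (hdir ω).1)
      (fun ω => rayIntegral_one_nonneg S ω) (hvol ▸ ENNReal.toReal_pos hS0 hSfin)
      (fun ω => (hdir ω).2)
  rw [← measure_smul_setAverage u hSfin, smul_eq_mul, mul_comm] at hlt_S
  exact lt_irrefl _ hlt_S

end Radial

theorem exit_radius_sq_le {T R c δ t s : ℝ} (hR : 0 < R) (hRT : R < T)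
    (hδ : δ ^ 2 = c ^ 2 - T ^ 2 + R ^ 2) (ht : 0 < t) (hts : t ≤ s) (hsT : s ≤ T)
    (htδ : |t - c| < δ) (hsδ : δ ≤ |s - c|) :
    s ^ 2 - 2 * s * (√(T ^ 2 - R ^ 2) / T * c) + √(T ^ 2 - R ^ 2) ^ 2 ≤ R ^ 2 := by
  set ρ := √(T ^ 2 - R ^ 2)
  have hT : 0 < T := hR.trans hRT
  have hρ : ρ ^ 2 = T ^ 2 - R ^ 2 := Real.sq_sqrt (by nlinarith)
  have hρ0 : 0 < ρ := Real.sqrt_pos.2 (by nlinarith)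
  have hρT : ρ < T := by nlinarith
  have hδ0 : 0 < δ := (abs_nonneg _).trans_lt htδ
  have hexit : c + δ ≤ s := by
    rcases le_abs'.1 hsδ with h | h <;> linarith [(abs_lt.1 htδ).1]
  have hc : 0 < c := by nlinarith [(abs_lt.1 htδ).2]
  have hρc : ρ ≤ c := by nlinarith
  have key : T * s ^ 2 + (-2 * ρ * c) * s + T * (ρ ^ 2 - R ^ 2) ≤ 0 := by
    refine quadratic_nonpos_of_mem_Icc hT.le ?_ ?_ ⟨hexit, hsT⟩
    · have he2 : (c + δ) ^ 2 = 2 * c * (c + δ) - ρ ^ 2 := by linear_combination hδ + hρ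
      have heT : (c + δ) ^ 2 ≤ T ^ 2 := pow_le_pow_left₀ (by positivity) (hexit.trans hsT) 2
      have hfe : T * (c + δ) ^ 2 + (-2 * ρ * c) * (c + δ) + T * (ρ ^ 2 - R ^ 2) =
          -((T - ρ) * (T * (T + ρ) - 2 * c * (c + δ))) := by
        linear_combination T * he2 - T * hρ
      rw [hfe, neg_nonpos]
      exact mul_nonneg (sub_nonneg.2 hρT.le) (by nlinarith)
    · nlinarith [mul_nonneg hT.le (mul_nonneg hρ0.le (sub_nonneg.2 hρc))]
  have hdiv : s ^ 2 - 2 * s * (ρ / T * c) + ρ ^ 2 - R ^ 2 =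
      (T * s ^ 2 + (-2 * ρ * c) * s + T * (ρ ^ 2 - R ^ 2)) / T := by
    field_simp
    ring
  linarith [div_nonpos_of_nonpos_of_nonneg key hT.le]

section Geometry

variable {E : Type*} [NormedAddCommGroup E] [InnerProductSpace ℝ E]

theorem norm_smul_sub_sq {ω : E} (hω : ‖ω‖ = 1) (r : ℝ) (z : E) :
    ‖r • ω - z‖ ^ 2 = r ^ 2 - 2 * r * ⟪z, ω⟫ + ‖z‖ ^ 2 := by
  rw [norm_sub_sq_real, real_inner_smul_left, real_inner_comm, norm_smul, Real.norm_eq_abs,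
    mul_pow, sq_abs, hω]
  ring

theorem smul_mem_ball_iff {ω : E} (hω : ‖ω‖ = 1) (r : ℝ) (x : E) {R : ℝ} (hR : 0 ≤ R) :
    r • ω ∈ ball x R ↔ |r - ⟪x, ω⟫| < √(⟪x, ω⟫ ^ 2 - ‖x‖ ^ 2 + R ^ 2) := by
  rw [mem_ball, dist_eq_norm, Real.lt_sqrt (abs_nonneg _), sq_abs,
    ← pow_lt_pow_iff_left₀ (norm_nonneg _) hR two_ne_zero, norm_smul_sub_sq hω]
  constructor <;> intro h <;> linarith

def radialShadow (x : E) (R : ℝ) : Set E :=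
  {y | ‖y‖ ≤ ‖x‖ ∧ ∃ t ∈ Ioc (0 : ℝ) 1, t • y ∈ ball x R}

theorem radialShadow_subset_closedBall (x : E) (R : ℝ) : radialShadow x R ⊆ closedBall 0 ‖x‖ :=
  fun _ hy => mem_closedBall_zero_iff.2 hy.1

theorem measurableSet_radialShadow [MeasurableSpace E] [OpensMeasurableSpace E] (x : E) (R : ℝ) :
    MeasurableSet (radialShadow x R) := by
  have : radialShadow x R = closedBall 0 ‖x‖ ∩ ⋃ t ∈ Ioc (0 : ℝ) 1, (t • ·) ⁻¹' ball x R := by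
    ext y; simp [radialShadow]
  rw [this]
  exact measurableSet_closedBall.inter (isOpen_biUnion fun t _ =>
    isOpen_ball.preimage (continuous_const_smul t)).measurableSet

/-- `√(‖x‖ ^ 2 - R ^ 2)` is the length of the tangents from the origin to `sphere x R`. -/
theorem smul_mem_closedBall_of_exit {ω x : E} (hω : ‖ω‖ = 1) {R t s : ℝ} (ht : 0 < t)
    (hts : t ≤ s) (hsx : s ≤ ‖x‖) (htB : t • ω ∈ ball x R) (hsB : s • ω ∉ ball x R) :
    s • ω ∈ closedBall ((√(‖x‖ ^ 2 - R ^ 2) / ‖x‖) • x) R := by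
  have hR : 0 < R := pos_of_mem_ball htB
  rcases le_or_gt ‖x‖ R with hxR | hRx
  · rw [Real.sqrt_eq_zero'.2 (by nlinarith [norm_nonneg x]), zero_div, zero_smul,
      mem_closedBall_zero_iff, norm_smul_of_norm_eq_one hω (ht.le.trans hts)]
    linarith
  rw [smul_mem_ball_iff hω _ x hR.le] at htB hsB
  have hx : 0 < ‖x‖ := hR.trans hRx
  rw [mem_closedBall, dist_eq_norm, ← pow_le_pow_iff_left₀ (norm_nonneg _) hR.le two_ne_zero,
    norm_smul_sub_sq hω, real_inner_smul_left, norm_smul, Real.norm_of_nonneg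
    (div_nonneg (Real.sqrt_nonneg _) hx.le), div_mul_cancel₀ _ hx.ne']
  exact exit_radius_sq_le hR hRx (Real.sq_sqrt (Real.sqrt_pos.1 ((abs_nonneg _).trans_lt htB)).le)
    ht hts hsx htB (not_lt.1 hsB)

theorem radialShadow_diff_ball_subset (x : E) (R : ℝ) :
    radialShadow x R \ ball x R ⊆ closedBall ((√(‖x‖ ^ 2 - R ^ 2) / ‖x‖) • x) R := by
  rintro y ⟨⟨hyx, t, ⟨ht0, ht1⟩, htB⟩, hyB⟩
  have hy : y ≠ 0 := by
    rintro rfl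
    rw [smul_zero] at htB
    exact hyB htB
  have hyω : ‖y‖ • (‖y‖⁻¹ • y) = y := smul_inv_smul₀ (norm_ne_zero_iff.2 hy) y
  rw [← hyω, smul_smul] at htB
  rw [← hyω] at hyB ⊢
  exact smul_mem_closedBall_of_exit (norm_smul_inv_norm hy) (mul_pos ht0 (norm_pos_iff.2 hy))
    (mul_le_of_le_one_left (norm_nonneg _) ht1) hyx htB hyB

theorem measure_ball_union_radialShadow_le [MeasurableSpace E] [BorelSpace E]
    [FiniteDimensional ℝ E] [Nontrivial E] (μ : Measure E) [μ.IsAddHaarMeasure] (x : E) (R : ℝ) :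
    μ (ball x R ∪ radialShadow x R) ≤ 2 * μ (ball x R) :=
  calc μ (ball x R ∪ radialShadow x R) = μ (ball x R ∪ (radialShadow x R \ ball x R)) := by
        rw [union_sdiff_self]
    _ ≤ μ (ball x R) + μ (closedBall ((√(‖x‖ ^ 2 - R ^ 2) / ‖x‖) • x) R) :=
        (measure_union_le _ _).trans (add_le_add_right
          (measure_mono (radialShadow_diff_ball_subset x R)) _)
    _ = 2 * μ (ball x R) := by
        rw [Measure.addHaar_closedBall_eq_addHaar_ball, Measure.addHaar_ball_center μ (_ • x),
          Measure.addHaar_ball_center μ x, two_mul]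

theorem exists_slice_ball_union_radialShadow {ω : E} (hω : ‖ω‖ = 1) (x : E) {R : ℝ}
    (hR : 0 ≤ R) : ∃ α β, 0 ≤ α ∧ α ≤ ‖x‖ ∧ ‖x‖ ≤ β ∧
      (∀ r ∈ Ioo α β, r • ω ∈ ball x R ∪ radialShadow x R) ∧
      ∀ r, 0 < r → r • ω ∈ ball x R ∪ radialShadow x R → r ∈ Icc α β := by
  set c := ⟪x, ω⟫
  set δ := √(c ^ 2 - ‖x‖ ^ 2 + R ^ 2)
  have hB (r : ℝ) : r • ω ∈ ball x R ↔ |r - c| < δ := smul_mem_ball_iff hω r x hR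
  have hS {r : ℝ} (hr : 0 < r) :
      r • ω ∈ radialShadow x R ↔ r ≤ ‖x‖ ∧ ∃ t ∈ Ioc 0 r, |t - c| < δ := by
    simp only [radialShadow, mem_ofPred_eq, norm_smul_of_norm_eq_one hω hr.le, smul_smul, hB]
    refine and_congr_right fun _ => ⟨fun ⟨t, ⟨ht0, ht1⟩, h⟩ =>
      ⟨t * r, ⟨mul_pos ht0 hr, mul_le_of_le_one_left hr.le ht1⟩, h⟩, fun ⟨t, ⟨ht0, htr⟩, h⟩ =>
      ⟨t / r, ⟨div_pos ht0 hr, div_le_one_of_le₀ htr hr.le⟩, by rwa [div_mul_cancel₀ _ hr.ne']⟩⟩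
  have hcx : c ≤ ‖x‖ := (real_inner_le_norm x ω).trans (by rw [hω, mul_one])
  by_cases hmeet : 0 < δ ∧ 0 < c + δ
  · obtain ⟨hδ, hcδ⟩ := hmeet
    set m := max (c - δ) 0
    have hm : m < c + δ := max_lt (by linarith) hcδ
    refine ⟨m, max (c + δ) ‖x‖, le_max_right _ _, max_le (by linarith) (norm_nonneg _),
      le_max_right _ _, ?_, ?_⟩
    · rintro r ⟨hmr, hrβ⟩
      rw [max_lt_iff] at hmr
      rcases lt_or_ge r (c + δ) with hr | hr
      · exact Or.inl ((hB r).2 (abs_lt.2 ⟨by linarith, by linarith⟩))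
      -- past the exit point, the ray is shadowed by its points just before the exit
      · refine Or.inr ((hS hmr.2).2 ⟨?_, (m + (c + δ)) / 2, ⟨?_, ?_⟩, abs_lt.2 ⟨?_, ?_⟩⟩)
        · rcases lt_max_iff.1 hrβ with h | h <;> linarith
        all_goals linarith [le_max_left (c - δ) 0, le_max_right (c - δ) 0]
    · rintro r hr (hrB | hrS)
      · obtain ⟨h1, h2⟩ := abs_lt.1 ((hB r).1 hrB)
        exact ⟨max_le (by linarith) hr.le, le_max_of_le_left (by linarith)⟩
      · obtain ⟨hrx, t, ⟨-, htr⟩, ht⟩ := (hS hr).1 hrS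
        exact ⟨max_le (by linarith [(abs_lt.1 ht).1]) hr.le, le_max_of_le_right hrx⟩
  · have hmiss {r : ℝ} (hr : 0 < r) : ¬ |r - c| < δ := fun h =>
      hmeet ⟨(abs_nonneg _).trans_lt h, by linarith [(abs_lt.1 h).2]⟩
    refine ⟨‖x‖, ‖x‖, norm_nonneg _, le_rfl, le_rfl,
      fun r hr => absurd (hr.1.trans hr.2) (lt_irrefl _), ?_⟩
    rintro r hr (hrB | hrS)
    · exact absurd ((hB r).1 hrB) (hmiss hr)
    · obtain ⟨-, t, ⟨ht0, -⟩, ht⟩ := (hS hr).1 hrS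
      exact absurd ht (hmiss ht0)

end Geometry

theorem stmt_14 (n : ℕ) (u : EuclideanSpace ℝ (Fin n) → ℝ) (u₀ : ℝ → ℝ)
    (hrad : ∀ y, u y = u₀ ‖y‖) (hpos : ∀ y, 0 ≤ u y)
    (hloc : LocallyIntegrable u) (x : EuclideanSpace ℝ (Fin n)) (R : ℝ) (hR : 0 < R) :
    ∃ a b : ℝ, 0 ≤ a ∧ a ≤ ‖x‖ ∧ ‖x‖ ≤ b ∧
      ⨍ y in Metric.ball x R, u y ≤
        2 * ⨍ y in {y : EuclideanSpace ℝ (Fin n) | a ≤ ‖y‖ ∧ ‖y‖ ≤ b}, u y := by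
  rcases subsingleton_or_nontrivial (EuclideanSpace ℝ (Fin n)) with hE | hE
  · refine ⟨0, ‖x‖, le_rfl, norm_nonneg x, le_rfl, ?_⟩
    have hball : ball x R = {y | 0 ≤ ‖y‖ ∧ ‖y‖ ≤ ‖x‖} := by
      ext y
      simp [Subsingleton.elim y x, hR]
    rw [hball, two_mul, le_add_iff_nonneg_left, setAverage_eq]
    exact smul_nonneg (inv_nonneg.2 measureReal_nonneg) (integral_nonneg hpos)
  · set S := ball x R ∪ radialShadow x R
    have hSm : MeasurableSet S := measurableSet_ball.union (measurableSet_radialShadow x R)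
    have hSb : Bornology.IsBounded S :=
      isBounded_ball.union (isBounded_closedBall.subset (radialShadow_subset_closedBall x R))
    have hB0 : volume (ball x R) ≠ 0 := (measure_ball_pos volume x hR).ne'
    have hvol : volume.real S ≤ 2 * volume.real (ball x R) := by
      simpa [measureReal_def, ENNReal.toReal_mul] using ENNReal.toReal_mono
        (by finiteness) (measure_ball_union_radialShadow_le volume x R)
    obtain ⟨a, b, ha, hax, hxb, hSa⟩ := exists_setAverage_le_setAverage_annulus hrad hloc hSm hSb
      (fun h => hB0 (measure_mono_null subset_union_left h))
      fun ω hω => exists_slice_ball_union_radialShadow hω x hR.le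
    refine ⟨a, b, ha, hax, hxb, ?_⟩
    calc ⨍ y in ball x R, u y ≤ 2 * ⨍ y in S, u y :=
          setAverage_le_mul_setAverage_of_subset subset_union_left (.of_forall hpos)
            ((hloc.integrableOn_isCompact hSb.isCompact_closure).mono_set subset_closure) hB0
            hSb.measure_lt_top.ne hvol
      _ ≤ 2 * ⨍ y in (‖·‖) ⁻¹' Icc a b, u y := by gcongr
end

section
/- Let w₀ : [0,∞) → [0,∞) satisfy, for some β > 0: w₀ is decreasing (w₀(s) ≤ w₀(t) for s ≥ t), and ∫₀^R w₀(t)t^(n-1)dt ≤ 2β·w₀(R)·R^n/n for all R > 0 (which holds for n > log₂β + 1 when w₀ is essentially constant over dyadic intervals). Then for every interval [a,b] ⊆ [0,∞) with b > 2a: (n/(b^n - a^n))·∫ₐᵇ w₀(t)t^(n-1)dt ≤ 4β · ess inf_{t ∈ [a,b]} w₀(t). -/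
/-!
Since `w₀` decreases, its average over `[a, b]` against `t ^ (n - 1) dt` is at most its integral
over the whole of `[0, b]`, which the Hardy-type hypothesis controls by `w₀ b`; the normalisation
loses only the factor `b ^ n / (b ^ n - a ^ n) ≤ 2` once `b > 2a`, and `w₀ b` is a lower bound for
`w₀` on `[a, b]`.
-/

open MeasureTheory Set

lemma two_mul_pow_le_pow_of_two_mul_le {a b : ℝ} (ha : 0 ≤ a) (hab : 2 * a ≤ b) {n : ℕ}
    (hn : n ≠ 0) : 2 * a ^ n ≤ b ^ n :=
  calc 2 * a ^ n ≤ 2 ^ n * a ^ n := by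
        gcongr
        exact le_self_pow₀ one_le_two hn
    _ = (2 * a) ^ n := (mul_pow 2 a n).symm
    _ ≤ b ^ n := by gcongr

lemma pow_div_pow_sub_pow_le_two {a b : ℝ} (ha : 0 ≤ a) (hab : 2 * a < b) {n : ℕ}
    (hn : n ≠ 0) : b ^ n / (b ^ n - a ^ n) ≤ 2 := by
  have hbn : 0 < b ^ n := pow_pos (by linarith) n
  have h2 := two_mul_pow_le_pow_of_two_mul_le ha hab.le hn
  rw [div_le_iff₀ (by linarith)]
  linarith

lemma AntitoneOn.le_essInf_restrict_Icc {w : ℝ → ℝ} {a b : ℝ} (hw : AntitoneOn w (Icc a b))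
    (hab : a < b) : w b ≤ essInf w (volume.restrict (Icc a b)) := by
  have : (ae (volume.restrict (Icc a b))).NeBot := by
    rw [ae_neBot, Ne, Measure.restrict_eq_zero, Real.volume_Icc, ENNReal.ofReal_eq_zero, not_le]
    linarith
  have hb : b ∈ Icc a b := right_mem_Icc.2 hab.le
  have ha : a ∈ Icc a b := left_mem_Icc.2 hab.le
  refine le_essInf_of_ae_le _ ?_ (Filter.isCoboundedUnder_ge_of_eventually_le _ (x := w a) ?_)
  · exact (ae_restrict_iff' measurableSet_Icc).2 (.of_forall fun t ht => hw ht hb ht.2)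
  · exact (ae_restrict_iff' measurableSet_Icc).2 (.of_forall fun t ht => hw ha ht ht.1)

theorem stmt_18_general (β : ℝ) (hβ : 0 < β) (w₀ : ℝ → ℝ)
    (hpos : ∀ t, 0 ≤ w₀ t)
    (hdec : ∀ s t : ℝ, 0 ≤ t → t ≤ s → w₀ s ≤ w₀ t)
    (n : ℕ) (hn : 1 ≤ n)
    (hhardy : ∀ R > (0:ℝ), ∫ t in (0:ℝ)..R, w₀ t * t ^ (n - 1) ≤
      2 * β * w₀ R * R ^ n / n)
    (a b : ℝ) (ha : 0 ≤ a) (hb : 2 * a < b) :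
    ((n : ℝ) / (b ^ n - a ^ n)) * ∫ t in a..b, w₀ t * t ^ (n - 1) ≤
      4 * β * essInf w₀ (volume.restrict (Set.Icc a b)) := by
  have hab : a < b := by linarith
  have hn0 : n ≠ 0 := Nat.one_le_iff_ne_zero.1 hn
  have hanti : AntitoneOn w₀ (Ici 0) := fun t ht s _ hts => hdec s t ht hts
  have hint : IntervalIntegrable (fun t => w₀ t * t ^ (n - 1)) volume 0 b :=
    (hanti.mono (by simp [uIcc_of_le (ha.trans hab.le), Icc_subset_Ici_self])).intervalIntegrable
      |>.mul_continuousOn (continuous_pow _).continuousOn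
  have hsub : ∫ t in a..b, w₀ t * t ^ (n - 1) ≤ ∫ t in (0:ℝ)..b, w₀ t * t ^ (n - 1) :=
    intervalIntegral.integral_mono_interval ha hab.le le_rfl
      ((ae_restrict_iff' measurableSet_Ioc).2 (.of_forall fun t ht =>
        mul_nonneg (hpos t) (pow_nonneg ht.1.le _))) hint
  have hgap : 0 < b ^ n - a ^ n := sub_pos.2 (pow_lt_pow_left₀ hab ha hn0)
  calc ((n : ℝ) / (b ^ n - a ^ n)) * ∫ t in a..b, w₀ t * t ^ (n - 1)
      ≤ (n / (b ^ n - a ^ n)) * (2 * β * w₀ b * b ^ n / n) := by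
        gcongr
        exact hsub.trans (hhardy b (by linarith))
    _ = 2 * β * w₀ b * (b ^ n / (b ^ n - a ^ n)) := by field_simp
    _ ≤ 2 * β * w₀ b * 2 := by
        have := hpos b
        gcongr
        exact pow_div_pow_sub_pow_le_two ha hb hn0
    _ = 4 * β * w₀ b := by ring
    _ ≤ 4 * β * essInf w₀ (volume.restrict (Set.Icc a b)) := by
        gcongr
        exact (hanti.mono fun t ht => ha.trans ht.1).le_essInf_restrict_Icc hab

theorem stmt_18 (β : ℝ) (hβ : 0 < β) (w₀ : ℝ → ℝ) (hmeas : Measurable w₀)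
    (hpos : ∀ t, 0 ≤ w₀ t)
    (hdec : ∀ s t : ℝ, 0 ≤ t → t ≤ s → w₀ s ≤ w₀ t)
    (n : ℕ) (hn : 1 ≤ n)
    (hhardy : ∀ R > (0:ℝ), ∫ t in (0:ℝ)..R, w₀ t * t ^ (n - 1) ≤
      2 * β * w₀ R * R ^ n / n)
    (a b : ℝ) (ha : 0 ≤ a) (hb : 2 * a < b) :
    ((n : ℝ) / (b ^ n - a ^ n)) * ∫ t in a..b, w₀ t * t ^ (n - 1) ≤
      4 * β * essInf w₀ (volume.restrict (Set.Icc a b)) :=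
  stmt_18_general β hβ w₀ hpos hdec n hn hhardy a b ha hb
end
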